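/- arXiv:2005.11087 — 5 statements merged into one kernel-verified Lean document; each statement's English description precedes it below -/
import Mathlib

section
/- Soundness Lemma: CM⁻ proves that for every universe U, the set {φ ∈ L_{Uni,Mod} : Mod(U, φ)} is deductively closed under first-order logic. -/
/-!
STATEMENT 6 (Soundness Lemma): CM⁻ proves that for every universe U, the set
{φ ∈ L_{Uni,Mod} : Mod(U, φ)} is deductively closed under first-order logic.

Formalization: a model of CM⁻ is presented with, for each universe u, its domain `Dom u`
(nonempty) together with an interpretation `struc u` of the (arbitrary first-order)
language L — standing for L_{Uni,Mod} — and the untyped satisfaction relation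
`Mod u φ g` on formulas with parameters, satisfying the Tarskian compositional axioms of
CM⁻ (for ⊥, =, atomic formulas, → and ∀; the clauses for ¬ and ∧ are interderivable with
these).  The conclusion: the set of sentences satisfied in u is deductively closed under
first-order logic — i.e. (by Gödel completeness) closed under first-order consequence ⊨ᵇ.
-/

open FirstOrder FirstOrder.Language

/-- A model of CM⁻, with the data relevant to the Soundness Lemma. -/
structure CMSatModel (L : FirstOrder.Language) where
  Uni : Type
  Dom : Uni → Type
  dom_ne : ∀ u : Uni, Nonempty (Dom u)
  struc : ∀ u : Uni, L.Structure (Dom u)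
  Mod : (u : Uni) → {n : ℕ} → L.BoundedFormula (Dom u) n → (Fin n → Dom u) → Prop
  mod_falsum : ∀ (u : Uni) (n : ℕ) (g : Fin n → Dom u),
    ¬ Mod u (BoundedFormula.falsum : L.BoundedFormula (Dom u) n) g
  mod_equal : ∀ (u : Uni) (n : ℕ) (t₁ t₂ : L.Term ((Dom u) ⊕ (Fin n))) (g : Fin n → Dom u),
    Mod u (BoundedFormula.equal t₁ t₂) g ↔
      (@Term.realize L (Dom u) (struc u) _ (Sum.elim id g) t₁ =
       @Term.realize L (Dom u) (struc u) _ (Sum.elim id g) t₂)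
  mod_rel : ∀ (u : Uni) (n k : ℕ) (R : L.Relations k)
      (ts : Fin k → L.Term ((Dom u) ⊕ (Fin n))) (g : Fin n → Dom u),
    Mod u (BoundedFormula.rel R ts) g ↔
      @Structure.RelMap L (Dom u) (struc u) k R
        (fun i => @Term.realize L (Dom u) (struc u) _ (Sum.elim id g) (ts i))
  mod_imp : ∀ (u : Uni) (n : ℕ) (φ ψ : L.BoundedFormula (Dom u) n) (g : Fin n → Dom u),
    Mod u (φ.imp ψ) g ↔ (Mod u φ g → Mod u ψ g)
  mod_all : ∀ (u : Uni) (n : ℕ) (φ : L.BoundedFormula (Dom u) (n + 1)) (g : Fin n → Dom u),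
    Mod u φ.all g ↔ ∀ a : Dom u, Mod u φ (Fin.snoc g a)

/-- The set of sentences satisfied in the universe u. -/
def CMSatModel.Th {L : FirstOrder.Language} (C : CMSatModel L) (u : C.Uni) : L.Theory :=
  {σ : L.Sentence |
    C.Mod u (BoundedFormula.relabel (fun x : Empty => x.elim) σ) (fun i => i.elim0)}

/-- Soundness Lemma: in every model of CM⁻ and for every universe u, the set of sentences
satisfied in u is deductively closed (closed under first-order consequence). -/
theorem soundness_lemma {L : FirstOrder.Language} (C : CMSatModel L) (u : C.Uni) :
    ∀ σ : L.Sentence, (C.Th u) ⊨ᵇ σ → σ ∈ C.Th u := by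
  letI := C.struc u
  have key : ∀ (n : ℕ) (φ : L.BoundedFormula (C.Dom u) n) (g : Fin n → C.Dom u),
      C.Mod u φ g ↔ φ.Realize id g := by
    intro n φ
    induction φ with
    | falsum =>
        intro g
        simp [BoundedFormula.Realize, fun g => C.mod_falsum u _ g]
    | equal t₁ t₂ =>
        intro g
        rw [C.mod_equal u _ t₁ t₂ g]
        simp [BoundedFormula.Realize]
    | rel R ts =>
        intro g
        rw [C.mod_rel u _ _ R ts g]
        simp [BoundedFormula.Realize]
    | imp φ ψ ihφ ihψ =>
        intro g
        rw [C.mod_imp u _ φ ψ g]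
        simp [BoundedFormula.Realize, ihφ, ihψ]
    | all φ ih =>
        intro g
        rw [C.mod_all u _ φ g]
        simp only [BoundedFormula.realize_all]
        constructor
        · intro h a; exact (ih _).mp (h a)
        · intro h a; exact (ih _).mpr (h a)
  have key' : ∀ σ : L.Sentence, σ ∈ C.Th u ↔ σ.Realize (C.Dom u) := by
    intro σ
    unfold CMSatModel.Th
    rw [Set.mem_setOf_eq, key]
    simp only [Sentence.Realize, Formula.Realize, BoundedFormula.realize_relabel]
    constructor
    · intro h; convert h using 2
    · intro h; convert h using 2
  intro σ hσ
  haveI : Nonempty (C.Dom u) := C.dom_ne u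
  haveI hmod : (C.Dom u) ⊨ C.Th u := ⟨fun {τ} hτ => (key' τ).mp hτ⟩
  exact (key' σ).mpr (hσ.realize_sentence (C.Dom u))
end

section
/- The schema T_CM, stating Tr^□(⌜σ⌝) → σ for every sentence σ of L_{Uni,Mod}, is inconsistent over CM⁻ + NEC. -/
/-!
STATEMENT 7: The schema T_CM, stating Tr^□(⌜σ⌝) → σ for every sentence σ of L_{Uni,Mod},
is inconsistent over CM⁻ + NEC.
Formalization: for any axiom set Ax (extending CM⁻) containing the T_CM schema and
having a Gödel-diagonal sentence λ with a proof of λ ↔ ¬Tr^□(⌜λ⌝) — CM⁻ provides such a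
λ by Gödel diagonalization — the system with the rule NEC proves ⊥.
-/

/-- An abstract rendering of the language L_{Uni,Mod}: sentences with falsum, implication,
conjunction, and the operation `box` taking (the code of) a sentence σ to the sentence
Tr^□(⌜σ⌝) = ∀U (Uni(U) → Mod(U, ⌜σ⌝)). -/
structure MLang where
  Sent : Type
  bot : Sent
  imp : Sent → Sent → Sent
  andc : Sent → Sent → Sent
  box : Sent → Sent

/-- Negation, defined from implication and falsum. -/
def MLang.neg (L : MLang) (φ : L.Sent) : L.Sent := L.imp φ L.bot

/-- Biconditional. -/
def MLang.iffc (L : MLang) (φ ψ : L.Sent) : L.Sent := L.andc (L.imp φ ψ) (L.imp ψ φ)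

/-- Hilbert-style provability from an axiom set `Ax` (standing for the first-order theory
under consideration, e.g. CM⁻ or CM plus further axioms), in classical logic, optionally
closed under the deductive rules NEC (⊢ φ ⟹ ⊢ Tr^□(⌜φ⌝)) and CONEC (⊢ Tr^□(⌜φ⌝) ⟹ ⊢ φ),
according to the flags `useNec`, `useConec`. -/
inductive MProof (L : MLang) (Ax : Set L.Sent) (useNec useConec : Prop) : L.Sent → Prop where
  | ax {φ : L.Sent} (h : φ ∈ Ax) : MProof L Ax useNec useConec φ
  | k1 (φ ψ : L.Sent) : MProof L Ax useNec useConec (L.imp φ (L.imp ψ φ))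
  | k2 (φ ψ χ : L.Sent) : MProof L Ax useNec useConec
      (L.imp (L.imp φ (L.imp ψ χ)) (L.imp (L.imp φ ψ) (L.imp φ χ)))
  | dne (φ : L.Sent) : MProof L Ax useNec useConec (L.imp (L.neg (L.neg φ)) φ)
  | andI (φ ψ : L.Sent) : MProof L Ax useNec useConec (L.imp φ (L.imp ψ (L.andc φ ψ)))
  | andE1 (φ ψ : L.Sent) : MProof L Ax useNec useConec (L.imp (L.andc φ ψ) φ)
  | andE2 (φ ψ : L.Sent) : MProof L Ax useNec useConec (L.imp (L.andc φ ψ) ψ)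
  | mp {φ ψ : L.Sent} : MProof L Ax useNec useConec (L.imp φ ψ) →
      MProof L Ax useNec useConec φ → MProof L Ax useNec useConec ψ
  | nec {φ : L.Sent} (h : useNec) : MProof L Ax useNec useConec φ →
      MProof L Ax useNec useConec (L.box φ)
  | conec {φ : L.Sent} (h : useConec) : MProof L Ax useNec useConec (L.box φ) →
      MProof L Ax useNec useConec φ

namespace MProofAux

variable {L : MLang} {Ax : Set L.Sent} {n c : Prop}

/-- Identity: ⊢ φ → φ. -/
theorem idI (φ : L.Sent) : MProof L Ax n c (L.imp φ φ) :=
  .mp (.mp (.k2 φ (L.imp φ φ) φ) (.k1 φ (L.imp φ φ))) (.k1 φ φ)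

/-- Composition: from ⊢ φ → ψ and ⊢ ψ → χ conclude ⊢ φ → χ. -/
theorem comp {φ ψ χ : L.Sent} (h1 : MProof L Ax n c (L.imp φ ψ))
    (h2 : MProof L Ax n c (L.imp ψ χ)) : MProof L Ax n c (L.imp φ χ) :=
  .mp (.mp (.k2 φ ψ χ) (.mp (.k1 (L.imp ψ χ) φ) h2)) h1

/-- Contraction: from ⊢ φ → (φ → ψ) conclude ⊢ φ → ψ. -/
theorem contract {φ ψ : L.Sent} (h : MProof L Ax n c (L.imp φ (L.imp φ ψ))) :
    MProof L Ax n c (L.imp φ ψ) :=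
  .mp (.mp (.k2 φ φ ψ) h) (idI φ)

end MProofAux

theorem tcm_inconsistent_over_cm_nec (L : MLang) (Ax : Set L.Sent)
    (hdiag : ∃ lam : L.Sent,
      MProof L Ax True False (L.iffc lam (L.neg (L.box lam))))
    (hT : ∀ σ : L.Sent, L.imp (L.box σ) σ ∈ Ax) :
    MProof L Ax True False L.bot := by
  obtain ⟨lam, hlam⟩ := hdiag
  have h1 : MProof L Ax True False (L.imp lam (L.neg (L.box lam))) :=
    .mp (.andE1 _ _) hlam
  have h2 : MProof L Ax True False (L.imp (L.neg (L.box lam)) lam) :=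
    .mp (.andE2 _ _) hlam
  have hTlam : MProof L Ax True False (L.imp (L.box lam) lam) := .ax (hT lam)
  -- ⊢ ¬□λ, i.e. □λ → ⊥
  have hnb : MProof L Ax True False (L.neg (L.box lam)) :=
    MProofAux.contract (MProofAux.comp hTlam h1)
  have hl : MProof L Ax True False lam := .mp h2 hnb
  exact .mp hnb (.nec trivial hl)
end

section
/- Over CM⁻ + NEC, the axiom Self-Perception implies the schema Multiverse Reflection: for every L-sentence σ, Tr^□(⌜σ⌝) → σ. -/
/-!
STATEMENT 10: Over CM⁻ + NEC, the axiom Self-Perception implies the schema Multiverse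
Reflection: for every L-sentence σ, Tr^□(⌜σ⌝) → σ.
Formalized semantically (NEC plays no role in the derivation, so the claim is
established over the weaker base CM⁻): in a model of CM⁻ with a distinguished universe
self ∈ Uni such that ι is an ∈-isomorphism of the background universe onto self — whose
semantic shadow, by absoluteness of satisfaction for standard L-formulas, is that for
every L-sentence σ, Mod(self, ⌜σ⌝) holds iff σ holds in the background universe — every
L-sentence true in all universes is true in the background universe.
-/

/-- A model of the theory CM⁻: a background universe (of ZF, abstracted) together with
a class `Uni` of universes, for each universe its type `Asg` of variable assignments
(nonempty, as universes are nonempty structures), and an untyped satisfaction relation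
`Mod u φ f` on (codes of) L_{Uni,Mod}-sentences, satisfying the compositional (Tarskian)
axioms of CM⁻ for ⊥, ¬, ∧ and → (the latter is derivable in CM⁻). -/
structure CMModel where
  Sent : Type
  Uni : Type
  Asg : Uni → Type
  asg_nonempty : ∀ u : Uni, Nonempty (Asg u)
  Mod : (u : Uni) → Sent → Asg u → Prop
  bot : Sent
  negc : Sent → Sent
  andc : Sent → Sent → Sent
  impc : Sent → Sent → Sent
  comp_bot : ∀ (u : Uni) (f : Asg u), ¬ Mod u bot f
  comp_neg : ∀ (u : Uni) (φ : Sent) (f : Asg u), Mod u (negc φ) f ↔ ¬ Mod u φ f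
  comp_and : ∀ (u : Uni) (φ ψ : Sent) (f : Asg u),
    Mod u (andc φ ψ) f ↔ (Mod u φ f ∧ Mod u ψ f)
  comp_imp : ∀ (u : Uni) (φ ψ : Sent) (f : Asg u),
    Mod u (impc φ ψ) f ↔ (Mod u φ f → Mod u ψ f)

/-- Tr^□(σ): σ holds in every universe (under every variable assignment). -/
def CMModel.TrBox (C : CMModel) (σ : C.Sent) : Prop :=
  ∀ (u : C.Uni) (f : C.Asg u), C.Mod u σ f

/-- Tr^◇(σ) := ¬ Tr^□(¬̇σ). -/
def CMModel.TrDia (C : CMModel) (σ : C.Sent) : Prop :=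
  ¬ C.TrBox (C.negc σ)

/-- A model of CM⁻ + Self-Perception: `LSent` marks the (codes of) L-sentences, `Val` their
truth in the background universe, `self` is a universe (Uni(self)), and `self_elem`
expresses Iso(self) via Proposition "iso elementarily equiv": satisfaction in self of an
L-sentence coincides with its truth in the background universe. -/
structure CMModelSP extends CMModel where
  LSent : Sent → Prop
  Val : Sent → Prop
  self : Uni
  self_elem : ∀ σ : Sent, LSent σ → ((∀ f : Asg self, Mod self σ f) ↔ Val σ)

theorem self_perception_implies_multiverse_reflection (C : CMModelSP) :
    ∀ σ : C.Sent, C.LSent σ → C.toCMModel.TrBox σ → C.Val σ := by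
  intro σ h hbox
  exact (C.self_elem σ h).mp (fun f => hbox C.self f)
end

section
/- Normal-form lemma for MS-derivations: if MS⁻ + S proves ψ, then there exists a sentence χ such that CM⁻ + NEC + S proves χ and CM⁻ + CONEC + S + χ proves ψ; equivalently, every theorem of MS⁻ + S has a Hilbert-style proof in which all applications of NEC occur before all applications of CONEC. -/
lemma MProof.mono {L : MLang} {Ax Ax' : Set L.Sent} {u u' c c' : Prop} {φ : L.Sent}
    (hA : Ax ⊆ Ax') (hu : u → u') (hc : c → c')
    (h : MProof L Ax u c φ) : MProof L Ax' u' c' φ := by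
  induction h with
  | ax h => exact .ax (hA h)
  | k1 φ ψ => exact .k1 φ ψ
  | k2 φ ψ χ => exact .k2 φ ψ χ
  | dne φ => exact .dne φ
  | andI φ ψ => exact .andI φ ψ
  | andE1 φ ψ => exact .andE1 φ ψ
  | andE2 φ ψ => exact .andE2 φ ψ
  | mp _ _ ih1 ih2 => exact .mp ih1 ih2
  | nec h _ ih => exact .nec (hu h) ih
  | conec h _ ih => exact .conec (hc h) ih

lemma MProof.subst {L : MLang} {Ax : Set L.Sent} {u c : Prop} {a b φ : L.Sent}
    (h : MProof L (insert a Ax) u c φ) (hb : MProof L (insert b Ax) u c a) :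
    MProof L (insert b Ax) u c φ := by
  induction h with
  | ax h =>
    rcases h with rfl | h
    · exact hb
    · exact .ax (Set.mem_insert_of_mem _ h)
  | k1 φ ψ => exact .k1 φ ψ
  | k2 φ ψ χ => exact .k2 φ ψ χ
  | dne φ => exact .dne φ
  | andI φ ψ => exact .andI φ ψ
  | andE1 φ ψ => exact .andE1 φ ψ
  | andE2 φ ψ => exact .andE2 φ ψ
  | mp _ _ ih1 ih2 => exact .mp ih1 ih2
  | nec h _ ih => exact .nec h ih
  | conec h _ ih => exact .conec h ih

lemma MProof.boxify {L : MLang} {Ax : Set L.Sent}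
    (hK : ∀ φ ψ : L.Sent,
      L.imp (L.box (L.imp φ ψ)) (L.imp (L.box φ) (L.box ψ)) ∈ Ax)
    {χ φ : L.Sent}
    (hχ : MProof L Ax True False χ)
    (h : MProof L (insert χ Ax) False True φ) :
    ∃ χ' : L.Sent, MProof L Ax True False χ' ∧
      MProof L (insert χ' Ax) False True (L.box φ) := by
  induction h with
  | @ax φ h =>
    rcases h with rfl | h
    · exact ⟨_, .nec trivial hχ, .ax (Set.mem_insert _ _)⟩
    · exact ⟨L.box φ, .nec trivial (.ax h), .ax (Set.mem_insert _ _)⟩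
  | k1 φ ψ => exact ⟨_, .nec trivial (.k1 φ ψ), .ax (Set.mem_insert _ _)⟩
  | k2 φ ψ χ => exact ⟨_, .nec trivial (.k2 φ ψ χ), .ax (Set.mem_insert _ _)⟩
  | dne φ => exact ⟨_, .nec trivial (.dne φ), .ax (Set.mem_insert _ _)⟩
  | andI φ ψ => exact ⟨_, .nec trivial (.andI φ ψ), .ax (Set.mem_insert _ _)⟩
  | andE1 φ ψ => exact ⟨_, .nec trivial (.andE1 φ ψ), .ax (Set.mem_insert _ _)⟩
  | andE2 φ ψ => exact ⟨_, .nec trivial (.andE2 φ ψ), .ax (Set.mem_insert _ _)⟩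
  | @mp φ ψ _ _ ih1 ih2 =>
    obtain ⟨χ1, p1, q1⟩ := ih1
    obtain ⟨χ2, p2, q2⟩ := ih2
    refine ⟨L.andc χ1 χ2, .mp (.mp (.andI χ1 χ2) p1) p2, ?_⟩
    have e1 : MProof L (insert (L.andc χ1 χ2) Ax) False True χ1 :=
      .mp (.andE1 χ1 χ2) (.ax (Set.mem_insert _ _))
    have e2 : MProof L (insert (L.andc χ1 χ2) Ax) False True χ2 :=
      .mp (.andE2 χ1 χ2) (.ax (Set.mem_insert _ _))
    exact .mp (.mp (.ax (Set.mem_insert_of_mem _ (hK φ ψ))) (q1.subst e1)) (q2.subst e2)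
  | nec h _ _ => exact absurd h (by simp)
  | conec _ _ ih =>
    obtain ⟨χ', p, q⟩ := ih
    exact ⟨χ', p, .conec trivial q⟩

theorem ms_normal_form (L : MLang) (Ax : Set L.Sent)
    (hK : ∀ φ ψ : L.Sent,
      L.imp (L.box (L.imp φ ψ)) (L.imp (L.box φ) (L.box ψ)) ∈ Ax)
    (ψ : L.Sent) (h : MProof L Ax True True ψ) :
    ∃ χ : L.Sent, MProof L Ax True False χ ∧ MProof L (insert χ Ax) False True ψ := by
  induction h with
  | @ax φ h => exact ⟨φ, .ax h, .ax (Set.mem_insert _ _)⟩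
  | k1 φ ψ => exact ⟨_, .k1 φ ψ, .ax (Set.mem_insert _ _)⟩
  | k2 φ ψ χ => exact ⟨_, .k2 φ ψ χ, .ax (Set.mem_insert _ _)⟩
  | dne φ => exact ⟨_, .dne φ, .ax (Set.mem_insert _ _)⟩
  | andI φ ψ => exact ⟨_, .andI φ ψ, .ax (Set.mem_insert _ _)⟩
  | andE1 φ ψ => exact ⟨_, .andE1 φ ψ, .ax (Set.mem_insert _ _)⟩
  | andE2 φ ψ => exact ⟨_, .andE2 φ ψ, .ax (Set.mem_insert _ _)⟩
  | @mp φ ψ _ _ ih1 ih2 =>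
    obtain ⟨χ1, p1, q1⟩ := ih1
    obtain ⟨χ2, p2, q2⟩ := ih2
    refine ⟨L.andc χ1 χ2, .mp (.mp (.andI χ1 χ2) p1) p2, ?_⟩
    have e1 : MProof L (insert (L.andc χ1 χ2) Ax) False True χ1 :=
      .mp (.andE1 χ1 χ2) (.ax (Set.mem_insert _ _))
    have e2 : MProof L (insert (L.andc χ1 χ2) Ax) False True χ2 :=
      .mp (.andE2 χ1 χ2) (.ax (Set.mem_insert _ _))
    exact .mp (q1.subst e1) (q2.subst e2)
  | nec _ _ ih =>
    obtain ⟨χ, p, q⟩ := ih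
    exact MProof.boxify hK p q
  | conec _ _ ih =>
    obtain ⟨χ, p, q⟩ := ih
    exact ⟨χ, p, .conec trivial q⟩
end

section
/- GR^ω proves that NEC is admissible for it: for every sentence σ of L_Sat, if GR^ω proves σ then GR^ω proves Tr(⌜σ⌝); consequently (by McGee's paradox) GR^ω is ω-inconsistent, and GR^ω + GR_{GR^ω} is inconsistent. -/
/-!
STATEMENT 19: GR^ω proves that NEC is admissible for it: for every L_Sat-sentence σ, if
GR^ω ⊢ σ then GR^ω ⊢ Tr(⌜σ⌝); consequently (by McGee's paradox) GR^ω is ω-inconsistent,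
and GR^ω + GR_{GR^ω} is inconsistent.

Abstract formalization.  `Pv n` is provability in GR^n (so GR^ω-provability `PvOmega` is
∃n, Pv n); `tr σ` is the sentence Tr(⌜σ⌝); `prS n σ` is Pr_{GR^n}(⌜σ⌝); `Fm` is the type
of formulas in one (arithmetic) free variable, with `instn ψ m` = ψ(m̄), `exN ψ` = ∃x ψ(x),
`bnd ψ` = ∀x(ψ(x) → x ∈ ℕ), and `trF ψ` the formula Tr(⌜ψ(ẋ)⌝).  The hypotheses record:
the hierarchy facts (monotonicity, closure under classical propositional logic, the
arithmetized derivability condition hD1, and the Global Reflection axioms hGR of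
GR^{n+1}); the GR^0-provable compositional (CT↾) facts for Tr; and the McGee diagonal
sentence γ with γ ↔ ∃n θ(n) and θ(n̄) ↔ ¬Tr^n(⌜γ⌝) (obtained by Gödel's fixed-point
lemma).  For GR^ω + GR_{GR^ω}: `PvP` is its provability, `prW σ` is Pr_{GR^ω+GR_{GR^ω}}(⌜σ⌝),
with its Global Reflection axioms hGRW, and hG2 is the relevant instance of Gödel's second
incompleteness theorem (if the theory proved its own consistency it would be inconsistent).

Conclusion: (i) NEC is admissible for GR^ω; (ii) GR^ω is ω-inconsistent; and
(iii) GR^ω + GR_{GR^ω} is inconsistent.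
-/

theorem gr_omega_nec_admissible_omega_inconsistent
    (Sent Fm : Type)
    (bot : Sent) (imp : Sent → Sent → Sent) (andc : Sent → Sent → Sent) (tr : Sent → Sent)
    (instn : Fm → ℕ → Sent) (exN bnd : Fm → Sent) (trF : Fm → Fm)
    (prS : ℕ → Sent → Sent) (prW : Sent → Sent)
    (Pv : ℕ → Sent → Prop) (PvP : Sent → Prop)
    (γ : Sent) (θ : Fm)
    -- abbreviations
    (neg : Sent → Sent) (hneg : ∀ a, neg a = imp a bot)
    (iffc : Sent → Sent → Sent) (hiffc : ∀ a b, iffc a b = andc (imp a b) (imp b a))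
    (trIter : ℕ → Sent → Sent) (htrIter0 : ∀ a, trIter 0 a = a)
    (htrIterS : ∀ n a, trIter (n + 1) a = tr (trIter n a))
    -- the GR hierarchy: monotone, closed under classical propositional logic
    (hmono : ∀ n σ, Pv n σ → Pv (n + 1) σ)
    (hmp : ∀ n a b, Pv n (imp a b) → Pv n a → Pv n b)
    (hk1 : ∀ n a b, Pv n (imp a (imp b a)))
    (hk2 : ∀ n a b c, Pv n (imp (imp a (imp b c)) (imp (imp a b) (imp a c))))
    (hdne : ∀ n a, Pv n (imp (neg (neg a)) a))
    (handI : ∀ n a b, Pv n (imp a (imp b (andc a b))))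
    (handE1 : ∀ n a b, Pv n (imp (andc a b) a))
    (handE2 : ∀ n a b, Pv n (imp (andc a b) b))
    (hexIntro : ∀ n ψ m, Pv n (imp (instn ψ m) (exN ψ)))
    -- arithmetized derivability (Σ1-completeness for proofs) and Global Reflection
    (hD1 : ∀ k σ, Pv k σ → Pv 0 (prS k σ))
    (hGR : ∀ k σ, Pv (k + 1) (imp (prS k σ) (tr σ)))
    -- CT↾-facts about Tr, provable in GR^0
    (hTimp : ∀ n a b, Pv n (imp (tr (imp a b)) (imp (tr a) (tr b))))
    (hTneg1 : ∀ n a, Pv n (imp (tr (neg a)) (neg (tr a))))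
    (hTneg2 : ∀ n a, Pv n (imp (neg (tr a)) (tr (neg a))))
    (hTrBot : ∀ n, Pv n (neg (tr bot)))
    (hTinst : ∀ n ψ m, Pv n (iffc (tr (instn ψ m)) (instn (trF ψ) m)))
    (hTex : ∀ n ψ, Pv n (imp (tr (exN ψ)) (exN (trF ψ))))
    (hTexR : ∀ n ψ, Pv n (imp (exN (trF ψ)) (tr (exN ψ))))
    (hTbnd : ∀ n ψ, Pv n (imp (tr (bnd ψ)) (bnd (trF ψ))))
    -- the McGee diagonal sentence (Gödel's fixed-point lemma)
    (hdiag1 : Pv 0 (iffc γ (exN θ)))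
    (hdiag2 : ∀ m, Pv 0 (iffc (instn θ m) (neg (trIter m γ))))
    (hbndθ : Pv 0 (bnd θ))
    -- GR^ω + GR_{GR^ω}
    (hsub : ∀ σ, (∃ n, Pv n σ) → PvP σ)
    (hPmp : ∀ a b, PvP (imp a b) → PvP a → PvP b)
    (hGRW : ∀ σ, PvP (imp (prW σ) (tr σ)))
    (hG2 : PvP (neg (prW bot)) → PvP bot) :
    -- (i) NEC is admissible for GR^ω
    (∀ σ, (∃ n, Pv n σ) → (∃ n, Pv n (tr σ))) ∧
    -- (ii) GR^ω is ω-inconsistent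
    (∃ ψ : Fm, (∃ n, Pv n (bnd ψ)) ∧ (∃ n, Pv n (exN ψ)) ∧
      ∀ m : ℕ, ∃ n, Pv n (neg (instn ψ m))) ∧
    -- (iii) GR^ω + GR_{GR^ω} is inconsistent
    PvP bot := by
  simp only [hneg, hiffc] at *
  -- basic Hilbert-style toolkit
  have I : ∀ n a, Pv n (imp a a) := fun n a =>
    hmp n _ _ (hmp n _ _ (hk2 n a (imp a a) a) (hk1 n a (imp a a))) (hk1 n a a)
  have B : ∀ n a b c, Pv n (imp (imp b c) (imp (imp a b) (imp a c))) := fun n a b c => by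
    have s1 := hk2 n a b c
    have s2 : Pv n (imp (imp b c) (imp (imp a (imp b c)) (imp (imp a b) (imp a c)))) :=
      hmp n _ _ (hk1 n _ (imp b c)) s1
    have s3 := hk1 n (imp b c) a
    exact hmp n _ _ (hmp n _ _
      (hk2 n (imp b c) (imp a (imp b c)) (imp (imp a b) (imp a c))) s2) s3
  have comp : ∀ n a b c, Pv n (imp a b) → Pv n (imp b c) → Pv n (imp a c) :=
    fun n a b c h1 h2 => hmp n _ _ (hmp n _ _ (B n a b c) h2) h1
  have sApp : ∀ n a b c, Pv n (imp a (imp b c)) → Pv n (imp a b) → Pv n (imp a c) :=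
    fun n a b c h1 h2 => hmp n _ _ (hmp n _ _ (hk2 n a b c) h1) h2
  have peirce : ∀ n a, Pv n (imp (imp a bot) a) → Pv n a := fun n a h =>
    hmp n _ _ (hdne n a) (sApp n (imp a bot) a bot (I n (imp a bot)) h)
  have iffL : ∀ n a b, Pv n (andc (imp a b) (imp b a)) → Pv n (imp a b) :=
    fun n a b h => hmp n _ _ (handE1 n _ _) h
  have iffR : ∀ n a b, Pv n (andc (imp a b) (imp b a)) → Pv n (imp b a) :=
    fun n a b h => hmp n _ _ (handE2 n _ _) h
  have pvle : ∀ (m n : ℕ) σ, m ≤ n → Pv m σ → Pv n σ := by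
    intro m n σ h hp
    induction n, h using Nat.le_induction with
    | base => exact hp
    | succ n _ ih => exact hmono n σ ih
  -- (i) NEC is admissible
  have nec : ∀ σ, (∃ n, Pv n σ) → ∃ n, Pv n (tr σ) := by
    rintro σ ⟨n, h⟩
    exact ⟨n + 1, hmp (n + 1) _ _ (hGR n σ) (pvle 0 (n + 1) _ (Nat.zero_le _) (hD1 n σ h))⟩
  -- GR^0 proves the McGee sentence γ
  have d1L : Pv 0 (imp γ (exN θ)) := iffL 0 _ _ hdiag1
  have d1R : Pv 0 (imp (exN θ) γ) := iffR 0 _ _ hdiag1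
  have hd20 := hdiag2 0
  rw [htrIter0] at hd20
  have h1 : Pv 0 (imp (imp γ bot) (instn θ 0)) := iffR 0 _ _ hd20
  have hh : Pv 0 (imp (imp γ bot) γ) :=
    comp 0 _ _ _ h1 (comp 0 _ _ _ (hexIntro 0 θ 0) d1R)
  have hγ : Pv 0 γ := peirce 0 γ hh
  -- each iterate Tr^m(γ) is provable in GR^ω
  have tIter : ∀ m, ∃ n, Pv n (trIter m γ) := by
    intro m
    induction m with
    | zero => rw [htrIter0]; exact ⟨0, hγ⟩
    | succ m ih => rw [htrIterS]; exact nec _ ih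
  refine ⟨nec, ⟨θ, ⟨0, hbndθ⟩, ⟨0, hmp 0 _ _ d1L hγ⟩, ?_⟩, ?_⟩
  · -- each ¬θ(m̄) is provable in GR^ω
    intro m
    obtain ⟨n, ht⟩ := tIter m
    have hd : Pv n (imp (instn θ m) (imp (trIter m γ) bot)) :=
      pvle 0 n _ (Nat.zero_le n) (iffL 0 _ _ (hdiag2 m))
    have hconst : Pv n (imp (instn θ m) (trIter m γ)) :=
      hmp n _ _ (hk1 n _ _) ht
    exact ⟨n, sApp n _ _ _ hd hconst⟩
  · -- inconsistency of GR^ω + GR_{GR^ω}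
    have t1 := hGRW bot
    have t2 : PvP (imp (tr bot) bot) := hsub _ ⟨0, hTrBot 0⟩
    have tB : PvP (imp (imp (tr bot) bot)
        (imp (imp (prW bot) (tr bot)) (imp (prW bot) bot))) :=
      hsub _ ⟨0, B 0 (prW bot) (tr bot) bot⟩
    exact hG2 (hPmp _ _ (hPmp _ _ tB t2) t1)
end
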